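/- arXiv:2007.12882 — 4 statements merged into one kernel-verified Lean document; each statement's English description precedes it below -/
import Mathlib

section
/- (Neuberger's zero-finding theorem, finite-dimensional case) Let r > 0, θ* ∈ ℝᵖ, and let G : ℝᵖ → ℝᵖ be continuous on the closed ball B̄_r(θ*). Suppose that for each θ in the closed ball B̄_r(θ*) there exists a vector d with ‖d‖ ≤ r such that lim_{t↓0} (G(θ + t d) − G(θ))/t = −G(θ*). Then there exists u ∈ B̄_r(θ*) with G(u) = 0. -/
open Filter

/-- Neuberger's zero-finding theorem (finite-dimensional case): if `G` is continuous on
the closed ball `B̄_r(θ*)` and for each `θ` in the ball there is a direction `d` with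
`‖d‖ ≤ r` whose one-sided directional derivative of `G` equals `−G(θ*)`, then `G`
vanishes somewhere in the ball. -/
theorem neuberger_zero_finding {p : ℕ} (r : ℝ) (hr : 0 < r)
    (θstar : EuclideanSpace ℝ (Fin p))
    (G : EuclideanSpace ℝ (Fin p) → EuclideanSpace ℝ (Fin p))
    (hcont : ContinuousOn G (Metric.closedBall θstar r))
    (hdir : ∀ θ ∈ Metric.closedBall θstar r,
      ∃ d : EuclideanSpace ℝ (Fin p), ‖d‖ ≤ r ∧
        Tendsto (fun t : ℝ => t⁻¹ • (G (θ + t • d) - G θ))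
          (nhdsWithin 0 (Set.Ioi 0)) (nhds (-G θstar))) :
    ∃ u ∈ Metric.closedBall θstar r, G u = 0 := by
  set v : EuclideanSpace ℝ (Fin p) := -G θstar with hv
  -- Key approximation lemma
  have key : ∀ ε : ℝ, 0 < ε → ∃ θ ∈ Metric.closedBall θstar r, ‖G θ‖ ≤ ε := by
    intro ε hε
    set S : Set ℝ := {t | t ∈ Set.Icc (0:ℝ) 1 ∧
      ∃ θ, dist θ θstar ≤ t * r ∧ ‖G θ - (G θstar + t • v)‖ ≤ ε * t} with hS
    have h0 : (0:ℝ) ∈ S := by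
      refine ⟨⟨le_refl 0, zero_le_one⟩, θstar, by simp, by simp⟩
    have hne : S.Nonempty := ⟨0, h0⟩
    have hbdd : BddAbove S := ⟨1, fun t ht => ht.1.2⟩
    set T := sSup S with hT
    have hT0 : 0 ≤ T := le_csSup hbdd h0
    have hT1 : T ≤ 1 := csSup_le hne (fun t ht => ht.1.2)
    -- membership in ball from the distance bound
    have memball : ∀ t : ℝ, t ≤ 1 → ∀ θ : EuclideanSpace ℝ (Fin p),
        dist θ θstar ≤ t * r → θ ∈ Metric.closedBall θstar r := by
      intro t ht θ hθ
      refine Metric.mem_closedBall.2 (hθ.trans ?_)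
      nlinarith
    -- T ∈ S (closedness via compactness)
    have hTS : T ∈ S := by
      obtain ⟨u, humono, hulim, huS⟩ := exists_seq_tendsto_sSup hne hbdd
      choose θs hθd hθn using fun n => (huS n).2
      have hball : ∀ n, θs n ∈ Metric.closedBall θstar r :=
        fun n => memball (u n) (huS n).1.2 (θs n) (hθd n)
      obtain ⟨x, hx, φ, hφmono, hφlim⟩ :=
        (isCompact_closedBall θstar r).tendsto_subseq hball
      have hulim' : Tendsto (u ∘ φ) atTop (nhds T) :=
        hulim.comp hφmono.tendsto_atTop
      have hGlim : Tendsto (fun n => G (θs (φ n))) atTop (nhds (G x)) := by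
        have hcw : ContinuousWithinAt G (Metric.closedBall θstar r) x := hcont x hx
        exact hcw.tendsto.comp (tendsto_nhdsWithin_of_tendsto_nhds_of_eventually_within
          _ hφlim (Eventually.of_forall fun n => hball (φ n)))
      refine ⟨⟨hT0, hT1⟩, x, ?_, ?_⟩
      · have h1 : Tendsto (fun n => dist (θs (φ n)) θstar) atTop (nhds (dist x θstar)) :=
          (Continuous.dist continuous_id continuous_const).continuousAt.tendsto.comp hφlim
        have h2 : Tendsto (fun n => u (φ n) * r) atTop (nhds (T * r)) :=
          hulim'.mul_const r
        exact le_of_tendsto_of_tendsto' h1 h2 (fun n => hθd (φ n))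
      · have h1 : Tendsto (fun n => ‖G (θs (φ n)) - (G θstar + u (φ n) • v)‖) atTop
            (nhds (‖G x - (G θstar + T • v)‖)) := by
          have : Tendsto (fun n => G (θs (φ n)) - (G θstar + u (φ n) • v)) atTop
              (nhds (G x - (G θstar + T • v))) :=
            hGlim.sub (tendsto_const_nhds.add (hulim'.smul tendsto_const_nhds))
          exact this.norm
        have h2 : Tendsto (fun n => ε * u (φ n)) atTop (nhds (ε * T)) :=
          hulim'.const_mul ε
        exact le_of_tendsto_of_tendsto' h1 h2 (fun n => hθn (φ n))
    -- T = 1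
    have hT1' : T = 1 := by
      by_contra hne1
      have hTlt : T < 1 := lt_of_le_of_ne hT1 hne1
      obtain ⟨⟨_, _⟩, θT, hθTd, hθTn⟩ := hTS
      have hθTball : θT ∈ Metric.closedBall θstar r := memball T hT1 θT hθTd
      obtain ⟨d, hd, htend⟩ := hdir θT hθTball
      have hev : ∀ᶠ t in nhdsWithin (0:ℝ) (Set.Ioi 0),
          ‖(fun t : ℝ => t⁻¹ • (G (θT + t • d) - G θT)) t - v‖ < ε := by
        have := htend.eventually (Metric.ball_mem_nhds (-G θstar) hε)
        filter_upwards [this] with t ht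
        rw [← hv] at ht
        simpa [dist_eq_norm] using ht
      obtain ⟨δ, hδ, hδev⟩ := Metric.mem_nhdsWithin_iff.1 hev
      set t := min (δ/2) (1 - T) with htdef
      have ht0 : 0 < t := lt_min (by linarith) (by linarith)
      have htδ : dist t (0:ℝ) < δ := by
        have : t ≤ δ/2 := min_le_left _ _
        rw [Real.dist_eq, sub_zero, abs_of_pos ht0]; linarith
      have ht1T : t ≤ 1 - T := min_le_right _ _
      have hq : ‖t⁻¹ • (G (θT + t • d) - G θT) - v‖ < ε :=
        hδev ⟨Metric.mem_ball.2 htδ, ht0⟩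
      have hstep : ‖G (θT + t • d) - G θT - t • v‖ ≤ ε * t := by
        have heq : G (θT + t • d) - G θT - t • v
            = t • (t⁻¹ • (G (θT + t • d) - G θT) - v) := by
          rw [smul_sub, smul_inv_smul₀ (ne_of_gt ht0)]
        rw [heq, norm_smul, Real.norm_eq_abs, abs_of_pos ht0]
        calc t * ‖t⁻¹ • (G (θT + t • d) - G θT) - v‖ ≤ t * ε :=
              mul_le_mul_of_nonneg_left hq.le ht0.le
          _ = ε * t := mul_comm _ _
      have hmem : T + t ∈ S := by
        refine ⟨⟨by linarith, by linarith⟩, θT + t • d, ?_, ?_⟩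
        · calc dist (θT + t • d) θstar ≤ dist (θT + t • d) θT + dist θT θstar :=
                dist_triangle _ _ _
            _ ≤ t * r + T * r := by
                refine add_le_add ?_ hθTd
                rw [dist_eq_norm]
                simp only [add_sub_cancel_left]
                rw [norm_smul, Real.norm_eq_abs, abs_of_pos ht0]
                exact mul_le_mul_of_nonneg_left hd ht0.le
            _ = (T + t) * r := by ring
        · have heq : G (θT + t • d) - (G θstar + (T + t) • v)
              = (G (θT + t • d) - G θT - t • v) + (G θT - (G θstar + T • v)) := by
            rw [add_smul]; abel
          rw [heq]
          calc ‖_ + _‖ ≤ ‖G (θT + t • d) - G θT - t • v‖ + ‖G θT - (G θstar + T • v)‖ :=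
                norm_add_le _ _
            _ ≤ ε * t + ε * T := add_le_add hstep hθTn
            _ = ε * (T + t) := by ring
      have : T + t ≤ T := le_csSup hbdd hmem
      linarith
    -- extract witness at T = 1
    obtain ⟨_, θ1, hθ1d, hθ1n⟩ := hTS
    rw [hT1'] at hθ1d hθ1n
    refine ⟨θ1, Metric.mem_closedBall.2 (by simpa using hθ1d), ?_⟩
    have : G θstar + (1:ℝ) • v = 0 := by simp [hv]
    calc ‖G θ1‖ = ‖G θ1 - (G θstar + (1:ℝ) • v)‖ := by rw [this, sub_zero]
      _ ≤ ε * 1 := hθ1n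
      _ = ε := mul_one ε
  -- minimize ‖G‖ on the compact ball
  obtain ⟨u, huball, humin⟩ := (isCompact_closedBall θstar r).exists_isMinOn
    ⟨θstar, Metric.mem_closedBall_self hr.le⟩ hcont.norm
  refine ⟨u, huball, ?_⟩
  have hle : ∀ ε : ℝ, 0 < ε → ‖G u‖ ≤ ε := by
    intro ε hε
    obtain ⟨θ, hθ, hθn⟩ := key ε hε
    exact (humin hθ).trans hθn
  have : ‖G u‖ ≤ 0 := le_of_forall_pos_le_add fun ε hε => by
    simpa using hle ε hε
  exact norm_le_zero_iff.1 this
end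

section
/- Let G : ℝᵖ → ℝᵖ be continuously differentiable on the closed ball B̄_r(θ*), and suppose for every θ ∈ B̄_r(θ*) the Jacobian DG(θ) is invertible and ‖DG(θ)⁻¹ G(θ*)‖₂ ≤ r. Then there exists u ∈ B̄_r(θ*) with G(u) = 0. -/
/-!
Continuation along the segment from `G θ*` towards `0`. Fix `s < 1` and consider the times
`t ∈ [0, 1]` at which `G θ* - t • s • G θ*` is the image of a point within distance `r t` of `θ*`.
This set contains `0`, is closed by compactness, and extends to the right of each of its points
below `1`: such a point lies in the open ball, where `G` is strictly differentiable, and the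
local inverse moves it with speed `‖DG⁻¹ (s • G θ*)‖ ≤ s r < r`. Hence `(1 - s) • G θ*` lies in
the compact image of the closed ball for every `s < 1`, and so does its limit `0`.
-/

open Metric Filter Set Topology

section

variable {𝕜 : Type*} [NontriviallyNormedField 𝕜]
  {E : Type*} [NormedAddCommGroup E] [NormedSpace 𝕜 E] [CompleteSpace E]
  {F : Type*} [NormedAddCommGroup F] [NormedSpace 𝕜 F]

theorem HasStrictFDerivAt.eventually_exists_apply_eq_add_smul {f : E → F} {f' : E ≃L[𝕜] F}
    {a : E} (hf : HasStrictFDerivAt f (f' : E →L[𝕜] F) a) (w : F) {ε : ℝ} (hε : 0 < ε) :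
    ∀ᶠ h : 𝕜 in 𝓝 0, ∃ x, f x = f a + h • w ∧ ‖x - a‖ ≤ ‖h‖ * (‖f'.symm w‖ + ε) := by
  set γ : 𝕜 → E := fun h => hf.localInverse f f' a (f a + h • w)
  have hline : HasDerivAt (fun h : 𝕜 => f a + h • w) w 0 := by
    simpa using ((hasDerivAt_id (0 : 𝕜)).smul_const w).const_add (f a)
  have hγ : HasDerivAt γ (f'.symm w) 0 :=
    hf.to_localInverse.hasFDerivAt.comp_hasDerivAt_of_eq 0 hline (by simp)
  have hγ0 : γ 0 = a := by simp [γ]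
  filter_upwards [hline.continuousAt.eventually (by simpa using hf.eventually_right_inverse),
    hγ.isLittleO.def hε] with h hright hsmall
  refine ⟨γ h, hright, ?_⟩
  rw [hγ0, sub_zero] at hsmall
  calc ‖γ h - a‖ ≤ ‖h • f'.symm w‖ + ‖γ h - a - h • f'.symm w‖ := norm_le_insert' _ _
    _ ≤ ‖h‖ * ‖f'.symm w‖ + ε * ‖h‖ := by rw [norm_smul]; gcongr
    _ = ‖h‖ * (‖f'.symm w‖ + ε) := by ring

end

section

variable {E : Type*} [NormedAddCommGroup E]
  {F : Type*} [NormedAddCommGroup F] [NormedSpace ℝ F]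

def liftableTimes (f : E → F) (a : E) (w : F) (ρ : ℝ) : Set ℝ :=
  {t | ∃ x, ‖x - a‖ ≤ ρ * t ∧ f x = f a + t • w}

theorem isClosed_liftableTimes_inter_Icc [ProperSpace E] {f : E → F} {a : E} {ρ : ℝ}
    (hρ : 0 ≤ ρ) (hf : ContinuousOn f (closedBall a ρ)) (w : F) :
    IsClosed (liftableTimes f a w ρ ∩ Icc 0 1) := by
  set S := Icc (0 : ℝ) 1 ×ˢ closedBall a ρ ∩ {p | ‖p.2 - a‖ ≤ ρ * p.1}
  set K := S ∩ (fun p : ℝ × E => f p.2 - p.1 • w) ⁻¹' {f a}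
  have hS : IsClosed S := (isClosed_Icc.prod isClosed_closedBall).inter
    (isClosed_le (continuous_snd.sub continuous_const).norm (continuous_const.mul continuous_fst))
  have hK : IsCompact K := by
    refine (isCompact_Icc.prod (isCompact_closedBall a ρ)).of_isClosed_subset ?_
      (fun p hp => hp.1.1)
    refine ContinuousOn.preimage_isClosed_of_isClosed ?_ hS isClosed_singleton
    exact (hf.comp continuousOn_snd fun p hp => hp.1.2).sub
      (continuous_fst.smul continuous_const).continuousOn
  suffices liftableTimes f a w ρ ∩ Icc 0 1 = Prod.fst '' K from
    this ▸ (hK.image continuous_fst).isClosed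
  ext t
  simp only [liftableTimes, K, S, mem_inter_iff, mem_ofPred_eq, mem_image, mem_prod,
    mem_preimage, mem_singleton_iff, Prod.exists, exists_and_right, exists_eq_right,
    mem_closedBall_iff_norm, sub_eq_iff_eq_add]
  constructor
  · rintro ⟨⟨x, hxa, hfx⟩, ht⟩
    exact ⟨x, ⟨⟨ht, hxa.trans (mul_le_of_le_one_right hρ ht.2)⟩, hxa⟩, hfx⟩
  · rintro ⟨x, ⟨⟨ht, -⟩, hxa⟩, hfx⟩
    exact ⟨⟨x, hxa, hfx⟩, ht⟩

theorem exists_mem_closedBall_apply_eq_add [NormedSpace ℝ E] [ProperSpace E] {f : E → F} {a : E}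
    {w : F} {ρ : ℝ} (hρ : 0 < ρ) (hf : ContinuousOn f (closedBall a ρ))
    (hf' : ∀ x ∈ ball a ρ, ∃ f' : E ≃L[ℝ] F,
      HasStrictFDerivAt f (f' : E →L[ℝ] F) x ∧ ‖f'.symm w‖ < ρ) :
    ∃ x ∈ closedBall a ρ, f x = f a + w := by
  have hzero : (0 : ℝ) ∈ liftableTimes f a w ρ := ⟨a, by simp, by simp⟩
  have hstep : ∀ t ∈ liftableTimes f a w ρ ∩ Ico 0 1,
      (liftableTimes f a w ρ ∩ Ioc t 1).Nonempty := by
    rintro t ⟨⟨x, hxa, hfx⟩, -, ht1⟩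
    have hx : x ∈ ball a ρ := mem_ball_iff_norm.2 (hxa.trans_lt (mul_lt_of_lt_one_right hρ ht1))
    obtain ⟨f', hf'x, hw⟩ := hf' x hx
    obtain ⟨h, ⟨y, hfy, hyx⟩, hh0, hh1⟩ :=
      (((hf'x.eventually_exists_apply_eq_add_smul w (sub_pos.2 hw)).filter_mono
        nhdsWithin_le_nhds).and (Ioc_mem_nhdsGT (sub_pos.2 ht1))).exists
    rw [Real.norm_of_nonneg hh0.le, add_sub_cancel] at hyx
    refine ⟨t + h, ⟨y, ?_, ?_⟩, by linarith, by linarith⟩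
    · calc ‖y - a‖ ≤ ‖y - x‖ + ‖x - a‖ := norm_sub_le_norm_sub_add_norm_sub _ _ _
        _ ≤ h * ρ + ρ * t := add_le_add hyx hxa
        _ = ρ * (t + h) := by ring
    · rw [hfy, hfx, add_assoc, add_smul]
  obtain ⟨x, hxa, hfx⟩ :=
    (isClosed_liftableTimes_inter_Icc hρ.le hf w).mem_of_ge_of_forall_exists_gt
      hzero zero_le_one hstep
  exact ⟨x, mem_closedBall_iff_norm.2 (by simpa using hxa), by simpa using hfx⟩

end

/-- Differentiable version of Neuberger's condition: if `G` is `C¹` on the closed ball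
`B̄_r(θ*)` with everywhere invertible Jacobian there, and `‖DG(θ)⁻¹ G(θ*)‖ ≤ r` on the
ball, then `G` has a zero in the ball. -/
theorem neuberger_zero_finding_differentiable {p : ℕ} (r : ℝ) (hr : 0 < r)
    (θstar : EuclideanSpace ℝ (Fin p))
    (G : EuclideanSpace ℝ (Fin p) → EuclideanSpace ℝ (Fin p))
    (G' Ginv : EuclideanSpace ℝ (Fin p) →
      (EuclideanSpace ℝ (Fin p) →L[ℝ] EuclideanSpace ℝ (Fin p)))
    (hderiv : ∀ θ ∈ Metric.closedBall θstar r, HasFDerivAt G (G' θ) θ)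
    (hcont : ContinuousOn G' (Metric.closedBall θstar r))
    (hinv : ∀ θ ∈ Metric.closedBall θstar r,
      (G' θ).comp (Ginv θ) = ContinuousLinearMap.id ℝ (EuclideanSpace ℝ (Fin p)) ∧
      (Ginv θ).comp (G' θ) = ContinuousLinearMap.id ℝ (EuclideanSpace ℝ (Fin p)))
    (hbound : ∀ θ ∈ Metric.closedBall θstar r, ‖Ginv θ (G θstar)‖ ≤ r) :
    ∃ u ∈ Metric.closedBall θstar r, G u = 0 := by
  set v := G θstar
  have hGcont : ContinuousOn G (closedBall θstar r) := fun θ hθ =>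
    (hderiv θ hθ).continuousAt.continuousWithinAt
  have hreach : ∀ s ∈ Ioo (0 : ℝ) 1, v + s • (-v) ∈ G '' closedBall θstar r := by
    intro s ⟨hs0, hs1⟩
    refine exists_mem_closedBall_apply_eq_add hr hGcont fun θ hθ => ?_
    have hθ' : θ ∈ closedBall θstar r := ball_subset_closedBall hθ
    have hnhds : closedBall θstar r ∈ 𝓝 θ :=
      mem_of_superset (isOpen_ball.mem_nhds hθ) ball_subset_closedBall
    refine ⟨.equivOfInverse' (G' θ) (Ginv θ) (hinv θ hθ').1 (hinv θ hθ').2,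
      hasStrictFDerivAt_of_hasFDerivAt_of_continuousAt (eventually_of_mem hnhds hderiv)
        (hcont.continuousAt hnhds), ?_⟩
    calc ‖Ginv θ (s • -v)‖ = s * ‖Ginv θ v‖ := by
          rw [map_smul, map_neg, norm_smul, norm_neg, Real.norm_of_nonneg hs0.le]
      _ ≤ s * r := by gcongr; exact hbound θ hθ'
      _ < r := mul_lt_of_lt_one_left hr hs1
  have hclosed : IsClosed (G '' closedBall θstar r) :=
    ((isCompact_closedBall θstar r).image_of_continuousOn hGcont).isClosed
  have hlim : Tendsto (fun s : ℝ => v + s • (-v)) (𝓝[<] 1) (𝓝 0) :=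
    ((continuous_const.add (continuous_id.smul continuous_const)).tendsto' 1 0
      (by simp [v])).mono_left nhdsWithin_le_nhds
  exact hclosed.mem_of_tendsto hlim (eventually_of_mem (Ioo_mem_nhdsLT one_pos) hreach)
end

section
/- Let X be an n × p matrix (n ≥ p) whose rows Xᵢ are independent sub-Gaussian isotropic random vectors in ℝᵖ with ‖Xᵢ‖₂ = √p almost surely. Then for every α > 0, with probability at least 1 − 2 exp(−c_K α² p), one has s_min(Xᵀ) ≥ (1 − α)√p − C_K √n and s_max(Xᵀ) ≤ (1 + α)√p + C_K √n. -/
open MeasureTheory ProbabilityTheory Matrix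

/-- The sub-Gaussian (ψ₂) norm of a real random variable. -/
noncomputable def psi2Norm {Ω : Type*} [MeasurableSpace Ω] (μ : Measure Ω) (Z : Ω → ℝ) : ℝ :=
  ⨆ γ : {g : ℝ // 1 ≤ g}, (γ.1) ^ (-(1 : ℝ) / 2) * (∫ ω, |Z ω| ^ (γ.1) ∂μ) ^ ((γ.1)⁻¹)

/-- Euclidean norm of a finite real vector. -/
noncomputable def enorm {m : ℕ} (x : Fin m → ℝ) : ℝ := Real.sqrt (∑ i, (x i) ^ 2)

/-- Smallest singular value, as the infimum of `‖Ax‖₂` over unit vectors. -/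
noncomputable def sMin {m k : ℕ} (A : Matrix (Fin m) (Fin k) ℝ) : ℝ :=
  ⨅ x : {x : Fin k → ℝ // _root_.enorm x = 1}, _root_.enorm (A.mulVec x.1)

/-- Largest singular value, as the supremum of `‖Ax‖₂` over unit vectors. -/
noncomputable def sMax {m k : ℕ} (A : Matrix (Fin m) (Fin k) ℝ) : ℝ :=
  ⨆ x : {x : Fin k → ℝ // _root_.enorm x = 1}, _root_.enorm (A.mulVec x.1)

/-!
Since `p ≤ n` and `C ≥ 1`, the lower bound `(1 - α)√p - C√n ≤ 0 ≤ s_min(Xᵀ)` is automatic.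
For the upper bound, `s_max(Xᵀ) = ‖X‖`, and on a `1/2`-net `N` of the unit sphere of `ℝᵖ`, of
size at most `5ᵖ`, one has `‖X‖ ≤ 2 max_{x ∈ N} ‖X x‖`. For a fixed unit `x` the variables
`⟨Xᵢ, x⟩` are independent with `ψ₂`-norm at most `K`, so their moments give
`E exp (⟨Xᵢ, x⟩² / (4 e K²)) ≤ 2`, and Chernoff's bound gives
`P (‖X x‖² ≥ t) ≤ 2ⁿ exp (-t / (4 e K²))`. A union bound over `N` with
`t = ((1 + α)√p + C√n)² / 4` and `C² ≥ 64 e K²` absorbs the entropy factor `5ᵖ 2ⁿ ≤ e⁴ⁿ`.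
-/

open Metric Real
open scoped ENNReal NNReal Nat Matrix.Norms.L2Operator

section Nets

variable {E : Type*} [NormedAddCommGroup E] [NormedSpace ℝ E] [FiniteDimensional ℝ E]

/-- Volumetric argument: the balls of radius `ε / 2` around the points of `F` are disjoint and
lie in the ball of radius `1 + ε / 2`. -/
theorem card_le_of_isSeparated_of_subset_closedBall {ε : ℝ≥0} (hε : 0 < ε) {F : Finset E}
    (hF : (F : Set E) ⊆ closedBall 0 1) (hsep : IsSeparated (ε : ℝ≥0∞) (F : Set E)) :
    (F.card : ℝ) ≤ (1 + 2 / ε) ^ Module.finrank ℝ E := by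
  borelize E
  set μ : Measure E := Measure.addHaar
  set r : ℝ := ε / 2 with hr
  have hr0 : 0 < r := by positivity
  have hdisj : (F : Set E).PairwiseDisjoint (fun x => ball x r) := by
    intro x hx y hy hxy
    refine ball_disjoint_ball ?_
    have h : ((ε : ℝ≥0) : ℝ≥0∞) < edist x y := hsep hx hy hxy
    rw [edist_dist, ← ENNReal.ofReal_coe_nnreal, ENNReal.ofReal_lt_ofReal_iff'] at h
    linarith [h.1]
  have hsub : (⋃ x ∈ F, ball x r) ⊆ ball (0 : E) (1 + r) := by
    intro z hz
    obtain ⟨x, hx, hzx⟩ := Set.mem_iUnion₂.1 hz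
    rw [mem_ball] at hzx ⊢
    linarith [dist_triangle z x 0, mem_closedBall.1 (hF hx)]
  have hvolume : (F.card : ℝ≥0∞) * (ENNReal.ofReal (r ^ Module.finrank ℝ E) * μ (ball 0 1)) ≤
      ENNReal.ofReal ((1 + r) ^ Module.finrank ℝ E) * μ (ball 0 1) :=
    calc (F.card : ℝ≥0∞) * (ENNReal.ofReal (r ^ Module.finrank ℝ E) * μ (ball 0 1))
        = ∑ x ∈ F, μ (ball x r) := by simp [Measure.addHaar_ball_of_pos μ _ hr0]
      _ = μ (⋃ x ∈ F, ball x r) :=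
        (measure_biUnion_finset hdisj fun x _ => measurableSet_ball).symm
      _ ≤ μ (ball 0 (1 + r)) := measure_mono hsub
      _ = _ := Measure.addHaar_ball_of_pos μ _ (by positivity)
  rw [← mul_assoc, ENNReal.mul_le_mul_iff_left (measure_ball_pos μ 0 one_pos).ne'
    measure_ball_lt_top.ne, ← ENNReal.ofReal_natCast, ← ENNReal.ofReal_mul (by positivity),
    ENNReal.ofReal_le_ofReal_iff (by positivity)] at hvolume
  have hratio : 1 + 2 / (ε : ℝ) = (1 + r) / r := by rw [hr]; field_simp; ring
  rwa [hratio, div_pow, le_div_iff₀ (by positivity)]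

theorem packingNumber_le_of_subset_closedBall {ε : ℝ≥0} (hε : 0 < ε) {k : ℕ}
    (hk : (1 + 2 / ε : ℝ) ^ Module.finrank ℝ E ≤ k) {A : Set E} (hA : A ⊆ closedBall 0 1) :
    packingNumber ε A ≤ k := by
  refine iSup_le fun C => iSup_le fun hCA => iSup_le fun hsep => ?_
  by_contra! hlt
  obtain ⟨t, htC, htcard⟩ := Set.exists_subset_encard_eq (Order.add_one_le_of_lt hlt)
  have ht : t.Finite := Set.finite_of_encard_eq_coe htcard
  have hcard : (ht.toFinset.card : ℝ) = k + 1 := by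
    rw [ht.encard_eq_coe_toFinset_card] at htcard
    exact_mod_cast htcard
  have := card_le_of_isSeparated_of_subset_closedBall hε (F := ht.toFinset)
    (by simpa using htC.trans (hCA.trans hA)) (by simpa using hsep.subset htC)
  linarith

theorem exists_isCover_sphere_card_le {ε : ℝ≥0} (hε : 0 < ε) {k : ℕ}
    (hk : (1 + 2 / ε : ℝ) ^ Module.finrank ℝ E ≤ k) :
    ∃ N : Finset E, (N : Set E) ⊆ sphere 0 1 ∧ IsCover ε (sphere 0 1) (N : Set E) ∧
      N.card ≤ k := by
  have hpack := packingNumber_le_of_subset_closedBall hε hk sphere_subset_closedBall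
  have hfin : packingNumber ε (sphere (0 : E) 1) ≠ ⊤ := ne_top_of_le_ne_top (by simp) hpack
  have hcard := (encard_maximalSeparatedSet hfin).trans_le hpack
  have hN := Set.finite_of_encard_le_coe hcard
  refine ⟨hN.toFinset, by simpa using maximalSeparatedSet_subset,
    by simpa using isCover_maximalSeparatedSet hfin, ?_⟩
  rwa [hN.encard_eq_coe_toFinset_card, Nat.cast_le] at hcard

end Nets

theorem ContinuousLinearMap.opNorm_le_of_isCover {E F : Type*} [NormedAddCommGroup E]
    [NormedSpace ℝ E] [NormedAddCommGroup F] [NormedSpace ℝ F] (f : E →L[ℝ] F) {ε : ℝ≥0}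
    (hε : ε < 1) {N : Set E} (hN : IsCover ε (sphere 0 1) N) {M : ℝ} (hM : 0 ≤ M)
    (hf : ∀ x ∈ N, ‖f x‖ ≤ M) : ‖f‖ ≤ M / (1 - ε) := by
  have hε' : (ε : ℝ) < 1 := by exact_mod_cast hε
  rw [le_div_iff₀ (by linarith)]
  suffices ‖f‖ ≤ M + ε * ‖f‖ by linarith
  refine f.opNorm_le_of_unit_norm (by positivity) fun u hu => ?_
  obtain ⟨x, hxN, hux⟩ := hN (mem_sphere_zero_iff_norm.2 hu)
  have hux : ‖u - x‖ ≤ ε := by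
    rwa [← dist_eq_norm, ← coe_nndist, NNReal.coe_le_coe, ← edist_le_coe]
  calc ‖f u‖ = ‖f x + f (u - x)‖ := by rw [map_sub, add_sub_cancel]
    _ ≤ M + ‖f‖ * ε := norm_add_le_of_le (hf x hxN) ((f.le_opNorm _).trans (by gcongr))
    _ = M + ε * ‖f‖ := by ring

namespace Matrix

theorem l2_opNorm_transpose {m n : Type*} [Fintype m] [Fintype n] [DecidableEq m]
    [DecidableEq n] (A : Matrix m n ℝ) : ‖Aᵀ‖ = ‖A‖ := by
  rw [← conjTranspose_eq_transpose_of_trivial, l2_opNorm_conjTranspose]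

theorem l2_opNorm_le_of_isCover {m n : Type*} [Fintype m] [Fintype n] [DecidableEq m]
    [DecidableEq n] (A : Matrix m n ℝ) {ε : ℝ≥0} (hε : ε < 1) {N : Set (EuclideanSpace ℝ n)}
    (hN : IsCover ε (sphere 0 1) N) {M : ℝ} (hM : 0 ≤ M)
    (hA : ∀ x ∈ N, ‖WithLp.toLp 2 (A *ᵥ x)‖ ≤ M) : ‖A‖ ≤ M / (1 - ε) :=
  ContinuousLinearMap.opNorm_le_of_isCover _ hε hN hM hA

theorem sMax_le_l2_opNorm {m k : ℕ} (A : Matrix (Fin m) (Fin k) ℝ) : sMax A ≤ ‖A‖ := by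
  have enorm_eq (n : ℕ) (x : Fin n → ℝ) : _root_.enorm x = ‖WithLp.toLp 2 x‖ := by
    simp [_root_.enorm, EuclideanSpace.norm_eq]
  refine Real.iSup_le (fun ⟨x, hx⟩ => ?_) (norm_nonneg A)
  rw [enorm_eq] at hx ⊢
  simpa [hx] using A.l2_opNorm_mulVec (WithLp.toLp 2 x)

theorem sMin_nonneg {m k : ℕ} (A : Matrix (Fin m) (Fin k) ℝ) : 0 ≤ sMin A :=
  Real.iInf_nonneg fun _ => Real.sqrt_nonneg _

theorem sMax_transpose_le_of_isCover {n p : ℕ} (A : Matrix (Fin n) (Fin p) ℝ) {ε : ℝ≥0}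
    (hε : ε < 1) {N : Set (EuclideanSpace ℝ (Fin p))} (hN : IsCover ε (sphere 0 1) N) {M : ℝ}
    (hM : 0 ≤ M) (hA : ∀ x ∈ N, ∑ i, (A *ᵥ x) i ^ 2 ≤ M ^ 2) : sMax Aᵀ ≤ M / (1 - ε) := by
  refine Aᵀ.sMax_le_l2_opNorm.trans ?_
  rw [l2_opNorm_transpose]
  refine A.l2_opNorm_le_of_isCover hε hN hM fun x hx => ?_
  rw [EuclideanSpace.norm_eq, ← Real.sqrt_sq hM]
  simpa using Real.sqrt_le_sqrt (hA x hx)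

theorem le_sMin_transpose_and_sMax_transpose_le_of_isCover {n p : ℕ} (hpn : p ≤ n)
    (A : Matrix (Fin n) (Fin p) ℝ) {N : Set (EuclideanSpace ℝ (Fin p))}
    (hN : IsCover (1 / 2) (sphere 0 1) N) {α C : ℝ} (hα : 0 ≤ α) (hC : 1 ≤ C)
    (hA : ∀ x ∈ N, ∑ i, (A *ᵥ x) i ^ 2 < (((1 + α) * √p + C * √n) / 2) ^ 2) :
    (1 - α) * √p - C * √n ≤ sMin Aᵀ ∧ sMax Aᵀ ≤ (1 + α) * √p + C * √n := by
  have hpn' : √p ≤ √n := Real.sqrt_le_sqrt (by exact_mod_cast hpn)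
  refine ⟨?_, ?_⟩
  · nlinarith [Aᵀ.sMin_nonneg, Real.sqrt_nonneg p]
  · have := A.sMax_transpose_le_of_isCover (by norm_num) hN (by positivity) fun x hx =>
      (hA x hx).le
    norm_num at this
    linarith

end Matrix

theorem abs_sum_mul_le_enorm {p : ℕ} (v x : Fin p → ℝ) (hx : ∑ j, x j ^ 2 = 1) :
    |∑ j, v j * x j| ≤ _root_.enorm v :=
  Real.abs_le_sqrt (by simpa [hx] using Finset.sum_mul_sq_le_sq_mul_sq Finset.univ v x)

section SubGaussian

variable {Ω : Type*} [MeasurableSpace Ω] {μ : Measure Ω} [IsProbabilityMeasure μ] {Z : Ω → ℝ}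
  {B K : ℝ}

theorem ofReal_one_sub_le_measure_of_compl_subset {s t : Set Ω} (hs : MeasurableSet s)
    (hst : sᶜ ⊆ t) {δ : ℝ} (hδ : μ.real s ≤ δ) : ENNReal.ofReal (1 - δ) ≤ μ t :=
  calc ENNReal.ofReal (1 - δ) ≤ ENNReal.ofReal (μ.real sᶜ) := by
        rw [probReal_compl_eq_one_sub hs]
        gcongr
    _ = μ sᶜ := ofReal_measureReal
    _ ≤ μ t := measure_mono hst

/-- `psi2Norm` is a `⨆` of reals, which is the junk value `0` on an unbounded range; an almost
sure bound on `Z` rules this out. -/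
theorem bddAbove_psi2_of_ae_abs_le (hZ : AEStronglyMeasurable Z μ) (hB : ∀ᵐ ω ∂μ, |Z ω| ≤ B) :
    BddAbove (Set.range fun γ : {g : ℝ // 1 ≤ g} =>
      γ.1 ^ (-(1 : ℝ) / 2) * (∫ ω, |Z ω| ^ γ.1 ∂μ) ^ γ.1⁻¹) := by
  refine ⟨|B|, ?_⟩
  rintro _ ⟨⟨γ, hγ⟩, rfl⟩
  have hγ0 : 0 < γ := by linarith
  have hpow : ∀ᵐ ω ∂μ, |Z ω| ^ γ ≤ |B| ^ γ := by
    filter_upwards [hB] with ω hω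
    exact Real.rpow_le_rpow (abs_nonneg _) (hω.trans (le_abs_self B)) hγ0.le
  have hint : ∫ ω, |Z ω| ^ γ ∂μ ≤ |B| ^ γ := by
    calc ∫ ω, |Z ω| ^ γ ∂μ ≤ ∫ _, |B| ^ γ ∂μ := by
          refine integral_mono_ae ?_ (integrable_const _) hpow
          refine .of_bound (hZ.norm.aemeasurable.pow_const γ).aestronglyMeasurable (|B| ^ γ) ?_
          filter_upwards [hpow] with ω hω
          rwa [Real.norm_eq_abs, abs_of_nonneg (by positivity)]
      _ = |B| ^ γ := by simp
  calc γ ^ (-(1 : ℝ) / 2) * (∫ ω, |Z ω| ^ γ ∂μ) ^ γ⁻¹ ≤ 1 * (|B| ^ γ) ^ γ⁻¹ := by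
        gcongr
        exact Real.rpow_le_one_of_one_le_of_nonpos hγ (by norm_num)
    _ = |B| := by
        rw [one_mul, ← Real.rpow_mul (abs_nonneg B), mul_inv_cancel₀ hγ0.ne', Real.rpow_one]

theorem integral_pow_two_mul_le_of_psi2Norm_le (hZ : AEStronglyMeasurable Z μ)
    (hB : ∀ᵐ ω ∂μ, |Z ω| ≤ B) (hK : psi2Norm μ Z ≤ K) (m : ℕ) :
    ∫ ω, Z ω ^ (2 * m) ∂μ ≤ (2 * K ^ 2 * m) ^ m := by
  rcases Nat.eq_zero_or_pos m with rfl | hm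
  · simp
  set γ : ℝ := ((2 * m : ℕ) : ℝ) with hγ
  have hγ1 : 1 ≤ γ := by rw [hγ]; norm_cast; omega
  have hγ0 : 0 < γ := by linarith
  have hI : ∫ ω, Z ω ^ (2 * m) ∂μ = ∫ ω, |Z ω| ^ γ ∂μ := by
    simp_rw [hγ, Real.rpow_natCast, (even_two_mul m).pow_abs]
  rw [hI]
  set I := ∫ ω, |Z ω| ^ γ ∂μ
  have hI0 : 0 ≤ I := integral_nonneg fun ω => by positivity
  have hmoment : γ ^ (-(1 : ℝ) / 2) * I ^ γ⁻¹ ≤ K :=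
    (le_ciSup (bddAbove_psi2_of_ae_abs_le hZ hB) ⟨γ, hγ1⟩).trans hK
  have hroot : I ^ γ⁻¹ ≤ K * √γ := by
    rwa [neg_div, Real.rpow_neg hγ0.le, ← Real.sqrt_eq_rpow, inv_mul_le_iff₀ (by positivity),
      mul_comm] at hmoment
  calc I = (I ^ γ⁻¹) ^ (2 * m) := (Real.rpow_inv_natCast_pow hI0 (by omega)).symm
    _ ≤ (K * √γ) ^ (2 * m) := by gcongr
    _ = (2 * K ^ 2 * m) ^ m := by
      rw [pow_mul, mul_pow, Real.sq_sqrt hγ0.le, hγ]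
      push_cast
      ring

/-- Expand `exp (l Z²)` in its power series and bound the `m`-th term by `2⁻ᵐ`, using
`mᵐ / m! ≤ eᵐ`. -/
theorem mgf_sq_le_two_of_psi2Norm_le (hZ : AEStronglyMeasurable Z μ) (hB : ∀ᵐ ω ∂μ, |Z ω| ≤ B)
    (hK : psi2Norm μ Z ≤ K) {l : ℝ} (hl : 0 ≤ l) (hlK : 4 * exp 1 * K ^ 2 * l ≤ 1) :
    mgf (fun ω => Z ω ^ 2) μ l ≤ 2 := by
  set F : ℕ → Ω → ℝ := fun m ω => l ^ m / m ! * Z ω ^ (2 * m)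
  have hF_nonneg (m : ℕ) (ω : Ω) : 0 ≤ F m ω := by
    simp only [F, pow_mul]; positivity
  have hF_int (m : ℕ) : Integrable (F m) μ := by
    refine .of_bound (by fun_prop) (l ^ m / m ! * B ^ (2 * m)) ?_
    filter_upwards [hB] with ω hω
    rw [Real.norm_eq_abs, abs_of_nonneg (hF_nonneg m ω)]
    simp only [F, ← (even_two_mul m).pow_abs (Z ω)]
    gcongr
  have hF_le (m : ℕ) : ∫ ω, F m ω ∂μ ≤ (1 / 2) ^ m :=
    calc ∫ ω, F m ω ∂μ = l ^ m / m ! * ∫ ω, Z ω ^ (2 * m) ∂μ := integral_const_mul _ _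
      _ ≤ l ^ m / m ! * (2 * K ^ 2 * m) ^ m := by
        gcongr; exact integral_pow_two_mul_le_of_psi2Norm_le hZ hB hK m
      _ = (2 * K ^ 2 * l) ^ m * (m ^ m / m !) := by ring
      _ ≤ (2 * K ^ 2 * l) ^ m * exp 1 ^ m := by
        gcongr
        rw [← Real.exp_nat_mul, mul_one]
        exact Real.pow_div_factorial_le_exp _ (Nat.cast_nonneg m) m
      _ = (2 * exp 1 * K ^ 2 * l) ^ m := by ring
      _ ≤ (1 / 2) ^ m := by gcongr; linarith
  have hexp (ω : Ω) : exp (l * Z ω ^ 2) = ∑' m, F m ω := by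
    rw [Real.exp_eq_exp_ℝ, NormedSpace.exp_eq_tsum_div]
    simp only [F, mul_pow, pow_mul]
    congr 1 with m
    ring
  have hF_norm (m : ℕ) : ∫ ω, ‖F m ω‖ ∂μ = ∫ ω, F m ω ∂μ :=
    integral_congr_ae (.of_forall fun ω => Real.norm_of_nonneg (hF_nonneg m ω))
  have hsum : Summable fun m => ∫ ω, ‖F m ω‖ ∂μ :=
    .of_nonneg_of_le (fun m => integral_nonneg fun ω => norm_nonneg _)
      (fun m => (hF_norm m).trans_le (hF_le m)) summable_geometric_two
  calc mgf (fun ω => Z ω ^ 2) μ l = ∑' m, ∫ ω, F m ω ∂μ := by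
        simp only [mgf, hexp]
        exact (integral_tsum_of_summable_integral_norm hF_int hsum).symm
    _ ≤ ∑' m : ℕ, (1 / 2 : ℝ) ^ m :=
        (hsum.congr hF_norm).tsum_le_tsum hF_le summable_geometric_two
    _ = 2 := tsum_geometric_two

theorem measureReal_sum_sq_ge_le {ι : Type*} [Fintype ι] {Z : ι → Ω → ℝ}
    (hZ : ∀ i, Measurable (Z i)) (hind : iIndepFun Z μ) (hB : ∀ i, ∀ᵐ ω ∂μ, |Z i ω| ≤ B)
    (hK : ∀ i, psi2Norm μ (Z i) ≤ K) (t : ℝ) :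
    μ.real {ω | t ≤ ∑ i, Z i ω ^ 2} ≤ 2 ^ Fintype.card ι * exp (-t / (4 * exp 1 * K ^ 2)) := by
  set l := (4 * exp 1 * K ^ 2)⁻¹
  have hl : 0 ≤ l := by positivity
  have hlK : 4 * exp 1 * K ^ 2 * l ≤ 1 := by
    rcases eq_or_ne (4 * exp 1 * K ^ 2) 0 with h | h
    · simp [h]
    · rw [mul_inv_cancel₀ h]
  set X : ι → Ω → ℝ := fun i ω => Z i ω ^ 2
  have hX : ∀ i, Measurable (X i) := fun i => (hZ i).pow_const 2
  have hindX : iIndepFun X μ := hind.comp (fun _ x => x ^ 2) fun _ => by fun_prop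
  have hint : Integrable (fun ω => exp (l * (∑ i, X i) ω)) μ := by
    refine .of_bound (by fun_prop) (exp (l * ∑ _i : ι, B ^ 2)) ?_
    filter_upwards [ae_all_iff.2 hB] with ω hω
    rw [Real.norm_of_nonneg (exp_pos _).le, Finset.sum_apply]
    gcongr with i
    exact sq_le_sq' (abs_le.1 (hω i)).1 (abs_le.1 (hω i)).2
  calc μ.real {ω | t ≤ ∑ i, Z i ω ^ 2} = μ.real {ω | t ≤ (∑ i, X i) ω} := by
        simp only [X, Finset.sum_apply]
    _ ≤ exp (-l * t) * mgf (∑ i, X i) μ l := measure_ge_le_exp_mul_mgf t hl hint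
    _ = exp (-l * t) * ∏ i, mgf (X i) μ l := by rw [hindX.mgf_sum hX]
    _ ≤ exp (-l * t) * ∏ _i : ι, 2 := by
        gcongr with i
        · exact fun i _ => mgf_nonneg
        · exact mgf_sq_le_two_of_psi2Norm_le (hZ i).aestronglyMeasurable (hB i) (hK i) hl hlK
    _ = 2 ^ Fintype.card ι * exp (-t / (4 * exp 1 * K ^ 2)) := by
        rw [Finset.prod_const, Finset.card_univ, neg_mul, neg_div, div_eq_inv_mul]
        ring

theorem measureReal_biUnion_sum_sq_ge_le {n p : ℕ} {R : Fin n → Ω → Fin p → ℝ}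
    (hR : ∀ i, Measurable (R i)) (hind : iIndepFun R μ)
    (hB : ∀ i, ∀ᵐ ω ∂μ, _root_.enorm (R i ω) ≤ B)
    (hK : ∀ i (u : Fin p → ℝ), ∑ j, u j ^ 2 = 1 → psi2Norm μ (fun ω => ∑ j, R i ω j * u j) ≤ K)
    {N : Finset (EuclideanSpace ℝ (Fin p))}
    (hN : (N : Set (EuclideanSpace ℝ (Fin p))) ⊆ sphere 0 1) (t : ℝ) :
    μ.real (⋃ x ∈ N, {ω | t ≤ ∑ i, (∑ j, R i ω j * x j) ^ 2}) ≤
      N.card * (2 ^ n * exp (-t / (4 * exp 1 * K ^ 2))) := by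
  refine (measureReal_biUnion_finset_le N _).trans ?_
  rw [← nsmul_eq_mul]
  refine Finset.sum_le_card_nsmul _ _ _ fun x hx => ?_
  have hx : ∑ j, x j ^ 2 = 1 := by
    have := mem_sphere_zero_iff_norm.1 (hN hx)
    rw [EuclideanSpace.norm_eq, Real.sqrt_eq_one] at this
    simpa using this
  have hproj : Measurable fun v : Fin p → ℝ => ∑ j, v j * x j := by fun_prop
  simpa using measureReal_sum_sq_ge_le (fun i => hproj.comp (hR i))
    (hind.comp (fun _ => _) fun _ => hproj)
    (fun i => (hB i).mono fun ω hω => (abs_sum_mul_le_enorm _ _ hx).trans hω)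
    (fun i => hK i x hx) t

end SubGaussian

theorem five_pow_mul_two_pow_mul_exp_le {n p : ℕ} (hpn : p ≤ n) {L α C : ℝ} (hL : 0 < L)
    (hα : 0 ≤ α) (hC : 0 ≤ C) (hLC : 16 * L ≤ C ^ 2) :
    5 ^ p * (2 ^ n * exp (-(((1 + α) * √p + C * √n) / 2) ^ 2 / L)) ≤
      exp (-(1 / (4 * L)) * α ^ 2 * p) := by
  have hT : α ^ 2 * p + C ^ 2 * n ≤ ((1 + α) * √p + C * √n) ^ 2 := by
    have hp := Real.sq_sqrt (Nat.cast_nonneg (α := ℝ) p)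
    have hn := Real.sq_sqrt (Nat.cast_nonneg (α := ℝ) n)
    nlinarith [mul_nonneg (mul_nonneg (by linarith : (0 : ℝ) ≤ 1 + α) hC)
      (mul_nonneg (Real.sqrt_nonneg p) (Real.sqrt_nonneg n)),
      mul_nonneg hα (Nat.cast_nonneg (α := ℝ) p)]
  have hexponent :
      1 / (4 * L) * α ^ 2 * p + 4 * n ≤ (((1 + α) * √p + C * √n) / 2) ^ 2 / L := by
    rw [div_pow, div_div, le_div_iff₀ (by positivity)]
    have : 16 * L * n ≤ C ^ 2 * n := by gcongr
    field_simp
    nlinarith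
  have hentropy : (5 : ℝ) ^ p * 2 ^ n ≤ exp (4 * n) :=
    calc (5 : ℝ) ^ p * 2 ^ n ≤ 5 ^ n * 2 ^ n := by gcongr; norm_num
      _ = 10 ^ n := by rw [← mul_pow]; norm_num
      _ ≤ exp 4 ^ n := by
        gcongr
        linarith [Real.quadratic_le_exp_of_nonneg (by norm_num : (0 : ℝ) ≤ 4)]
      _ = exp (4 * n) := by rw [← Real.exp_nat_mul, mul_comm]
  calc 5 ^ p * (2 ^ n * exp (-(((1 + α) * √p + C * √n) / 2) ^ 2 / L))
      ≤ exp (4 * n) * exp (-(1 / (4 * L) * α ^ 2 * p + 4 * n)) := by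
        rw [← mul_assoc, neg_div]
        gcongr
    _ = exp (-(1 / (4 * L)) * α ^ 2 * p) := by rw [← Real.exp_add]; ring_nf

/-- Vershynin's bound for matrices with independent sub-Gaussian isotropic rows of norm
`√p`: with probability at least `1 − 2 exp(−c_K α² p)`, `s_min(Xᵀ) ≥ (1−α)√p − C_K √n` and
`s_max(Xᵀ) ≤ (1+α)√p + C_K √n`. -/
theorem singular_values_subgaussian_columns (K : ℝ) (hK : 0 < K) :
    ∃ c C : ℝ, 0 < c ∧ 0 < C ∧
      ∀ (Ω : Type) [MeasurableSpace Ω] (μ : Measure Ω), IsProbabilityMeasure μ →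
        ∀ (n p : ℕ), p ≤ n →
          ∀ (R : Fin n → Ω → Fin p → ℝ),
          (∀ i, Measurable (R i)) →
          iIndepFun R μ →
          (∀ i j k, ∫ ω, R i ω j * R i ω k ∂μ = if j = k then 1 else 0) →
          (∀ i, ∀ᵐ ω ∂μ, _root_.enorm (R i ω) = Real.sqrt p) →
          (∀ i (u : Fin p → ℝ), (∑ j, (u j) ^ 2) = 1 →
            psi2Norm μ (fun ω => ∑ j, R i ω j * u j) ≤ K) →
          ∀ α : ℝ, 0 < α →
            ENNReal.ofReal (1 - 2 * Real.exp (-c * α ^ 2 * p)) ≤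
              μ {ω | (1 - α) * Real.sqrt p - C * Real.sqrt n ≤
                    sMin (Matrix.of fun i j => R i ω j)ᵀ ∧
                  sMax (Matrix.of fun i j => R i ω j)ᵀ ≤
                    (1 + α) * Real.sqrt p + C * Real.sqrt n} := by
  set L := 4 * exp 1 * K ^ 2
  have hL : 0 < L := by positivity
  refine ⟨1 / (4 * L), 1 + 16 * L, by positivity, by positivity, ?_⟩
  intro Ω _ μ _ n p hpn R hR hind _ hnorm hψ α hα
  obtain ⟨N, hNsphere, hNcover, hNcard⟩ := exists_isCover_sphere_card_le
    (E := EuclideanSpace ℝ (Fin p)) (ε := 1 / 2) (k := 5 ^ p) (by norm_num) (by norm_num)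
  set T := (1 + α) * √p + (1 + 16 * L) * √n
  set bad := ⋃ x ∈ N, {ω | (T / 2) ^ 2 ≤ ∑ i, (∑ j, R i ω j * x j) ^ 2}
  have hbad : μ.real bad ≤ exp (-(1 / (4 * L)) * α ^ 2 * p) :=
    calc μ.real bad ≤ N.card * (2 ^ n * exp (-(T / 2) ^ 2 / L)) :=
          measureReal_biUnion_sum_sq_ge_le hR hind (fun i => (hnorm i).mono fun _ h => h.le) hψ
            hNsphere _
      _ ≤ 5 ^ p * (2 ^ n * exp (-(T / 2) ^ 2 / L)) := by gcongr; exact_mod_cast hNcard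
      _ ≤ _ := five_pow_mul_two_pow_mul_exp_le hpn hL hα.le (by positivity) (by nlinarith)
  have hgood : badᶜ ⊆ {ω | (1 - α) * √p - (1 + 16 * L) * √n ≤
      sMin (Matrix.of fun i j => R i ω j)ᵀ ∧ sMax (Matrix.of fun i j => R i ω j)ᵀ ≤ T} := by
    intro ω hω
    simp only [bad, Set.mem_compl_iff, Set.mem_iUnion, Set.mem_ofPred_eq, not_exists, not_le] at hω
    exact Matrix.le_sMin_transpose_and_sMax_transpose_le_of_isCover hpn _ hNcover hα.le
      (by linarith) fun x hx => by simpa [Matrix.mulVec, dotProduct] using hω x hx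
  have hmeas : MeasurableSet bad :=
    .biUnion N.countable_toSet fun x _ => measurableSet_le measurable_const (by fun_prop)
  exact ofReal_one_sub_le_measure_of_compl_subset hmeas hgood
    (hbad.trans (by linarith [exp_pos (-(1 / (4 * L)) * α ^ 2 * p)]))
end

section
/- With p_min = min_k p_k, the second moment of the coupon collector time satisfies E[N²] ≤ 2 p_min^{−2} Σ_{k=1}^K C(K,k)/k², and consequently Var(N) ≤ 2 p_min^{−2} Σ_{k=1}^K C(K,k)/k². -/
/-!
The square of the maximum of the `T k` is at most `∑ k, T k ^ 2`.
By the layer-cake formula an exponential time of rate `r` has second moment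
`∫ 2 t e^{-r t} dt = 2 / r²`, so `E[N²] ≤ 2 K / p_min²`, and `K` is the `k = 1` term of
`∑ k, C(K, k) / k²`. The variance is at most the second moment.
-/

open MeasureTheory ProbabilityTheory Set Real

lemma integrableOn_Ioi_mul_exp_neg_mul {r : ℝ} (hr : 0 < r) :
    IntegrableOn (fun t : ℝ => t * exp (-(r * t))) (Ioi 0) := by
  simpa using integrableOn_rpow_mul_exp_neg_mul_rpow (s := 1) (p := 1) (by norm_num) zero_lt_one hr

lemma integral_Ioi_mul_exp_neg_mul {r : ℝ} (hr : 0 < r) :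
    ∫ t in Ioi (0 : ℝ), t * exp (-(r * t)) = r⁻¹ ^ 2 := by
  have h := integral_rpow_mul_exp_neg_mul_Ioi (a := 2) two_pos hr
  norm_num [Real.Gamma_two] at h
  rw [h, inv_pow]

section ExponentialTail

variable {Ω : Type*} [MeasurableSpace Ω] {μ : Measure Ω} {X : Ω → ℝ} {r : ℝ}

lemma lintegral_ofReal_sq_eq_of_exp_tail (hr : 0 < r) (hX_nonneg : 0 ≤ᵐ[μ] X)
    (hX : AEMeasurable X μ)
    (htail : ∀ t, 0 ≤ t → μ {ω | t < X ω} = ENNReal.ofReal (exp (-r * t))) :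
    ∫⁻ ω, ENNReal.ofReal (X ω ^ 2) ∂μ = ENNReal.ofReal (2 * r⁻¹ ^ 2) := by
  have h_two_mul_nonneg : ∀ᵐ t ∂volume.restrict (Ioi (0 : ℝ)), 0 ≤ 2 * t :=
    (ae_restrict_mem measurableSet_Ioi).mono fun t ht => mul_nonneg zero_le_two (le_of_lt ht)
  have h_layercake := lintegral_comp_eq_lintegral_meas_lt_mul μ hX_nonneg hX (g := fun t => 2 * t)
    (fun t _ => (continuous_const.mul continuous_id).intervalIntegrable 0 t) h_two_mul_nonneg
  have h_antideriv : ∀ x : ℝ, ∫ t in (0 : ℝ)..x, 2 * t = x ^ 2 := fun x => by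
    rw [intervalIntegral.integral_const_mul, integral_id]; ring
  simp only [h_antideriv] at h_layercake
  rw [h_layercake, ← integral_Ioi_mul_exp_neg_mul hr, ← integral_const_mul,
    ofReal_integral_eq_lintegral_ofReal ((integrableOn_Ioi_mul_exp_neg_mul hr).const_mul 2)
      ((ae_restrict_mem measurableSet_Ioi).mono fun t ht =>
        mul_nonneg zero_le_two (mul_nonneg (le_of_lt ht) (exp_nonneg _)))]
  refine setLIntegral_congr_fun measurableSet_Ioi fun t ht => ?_
  rw [htail t (le_of_lt ht), ← ENNReal.ofReal_mul (exp_nonneg _)]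
  ring_nf

variable [IsProbabilityMeasure μ]

lemma ae_nonneg_of_exp_tail (hX : Measurable X)
    (htail : ∀ t, 0 ≤ t → μ {ω | t < X ω} = ENNReal.ofReal (exp (-r * t))) :
    0 ≤ᵐ[μ] X := by
  have h_pos : ∀ᵐ ω ∂μ, 0 < X ω := by
    rw [ae_iff_measure_eq (measurableSet_lt measurable_const hX).nullMeasurableSet,
      htail 0 le_rfl, measure_univ]
    simp
  exact h_pos.mono fun ω hω => hω.le

lemma integrable_sq_of_exp_tail (hr : 0 < r) (hX : Measurable X)
    (htail : ∀ t, 0 ≤ t → μ {ω | t < X ω} = ENNReal.ofReal (exp (-r * t))) :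
    Integrable (fun ω => X ω ^ 2) μ := by
  refine ⟨(hX.pow_const 2).aestronglyMeasurable, ?_⟩
  rw [hasFiniteIntegral_iff_ofReal (ae_of_all _ fun ω => sq_nonneg (X ω)),
    lintegral_ofReal_sq_eq_of_exp_tail hr (ae_nonneg_of_exp_tail hX htail) hX.aemeasurable htail]
  exact ENNReal.ofReal_lt_top

lemma integral_sq_of_exp_tail (hr : 0 < r) (hX : Measurable X)
    (htail : ∀ t, 0 ≤ t → μ {ω | t < X ω} = ENNReal.ofReal (exp (-r * t))) :
    ∫ ω, X ω ^ 2 ∂μ = 2 * r⁻¹ ^ 2 := by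
  rw [integral_eq_lintegral_of_nonneg_ae (ae_of_all _ fun ω => sq_nonneg (X ω))
      (hX.pow_const 2).aestronglyMeasurable,
    lintegral_ofReal_sq_eq_of_exp_tail hr (ae_nonneg_of_exp_tail hX htail) hX.aemeasurable htail,
    ENNReal.toReal_ofReal (by positivity)]

end ExponentialTail

lemma sq_ciSup_le_sum_sq {ι : Type*} [Fintype ι] (f : ι → ℝ) :
    (⨆ i, f i) ^ 2 ≤ ∑ i, f i ^ 2 := by
  cases isEmpty_or_nonempty ι
  · simp [Real.iSup_of_isEmpty]
  · obtain ⟨j, hj⟩ := exists_eq_ciSup_of_finite (f := f)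
    rw [← hj]
    exact Finset.single_le_sum (f := fun i => f i ^ 2) (fun i _ => sq_nonneg _)
      (Finset.mem_univ j)

lemma inv_le_inv_ciInf {ι : Type*} [Finite ι] {p : ι → ℝ} (hp : ∀ i, 0 < p i) (i : ι) :
    (p i)⁻¹ ≤ (⨅ j, p j)⁻¹ := by
  have : Nonempty ι := ⟨i⟩
  obtain ⟨j, hj⟩ := exists_eq_ciInf_of_finite (f := p)
  exact inv_anti₀ (hj ▸ hp j) (ciInf_le (Finite.bddBelow_range p) i)

lemma natCast_le_sum_choose_div_sq (K : ℕ) :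
    (K : ℝ) ≤ ∑ k ∈ Finset.Icc 1 K, (K.choose k : ℝ) / k ^ 2 := by
  rcases Nat.eq_zero_or_pos K with rfl | hK
  · simp
  · calc (K : ℝ) = (K.choose 1 : ℝ) / (1 : ℕ) ^ 2 := by simp
      _ ≤ _ := Finset.single_le_sum (f := fun k : ℕ => (K.choose k : ℝ) / k ^ 2)
        (fun k _ => by positivity) (Finset.mem_Icc.mpr ⟨le_rfl, hK⟩)

theorem coupon_collector_second_moment_bound_general {Ω : Type*} [MeasurableSpace Ω]
    (μ : Measure Ω) [IsProbabilityMeasure μ]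
    (K : ℕ) (p : Fin K → ℝ) (hp : ∀ k, 0 < p k)
    (T : Fin K → Ω → ℝ) (hmeas : ∀ k, Measurable (T k))
    (hexp : ∀ k (t : ℝ), 0 ≤ t →
      μ {ω | t < T k ω} = ENNReal.ofReal (Real.exp (-(p k) * t)))
    (N : Ω → ℝ) (hN : ∀ ω, N ω = ⨆ k, T k ω)
    (pmin : ℝ) (hpmin : pmin = ⨅ k, p k) :
    (∫ ω, (N ω) ^ 2 ∂μ ≤
      2 * pmin⁻¹ ^ 2 * ∑ k ∈ Finset.Icc 1 K, (K.choose k : ℝ) / k ^ 2) ∧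
    (variance N μ ≤
      2 * pmin⁻¹ ^ 2 * ∑ k ∈ Finset.Icc 1 K, (K.choose k : ℝ) / k ^ 2) := by
  have hN_meas : Measurable N := (funext hN : N = fun ω => ⨆ k, T k ω) ▸ Measurable.iSup hmeas
  have h_second_moment : ∫ ω, N ω ^ 2 ∂μ ≤
      2 * pmin⁻¹ ^ 2 * ∑ k ∈ Finset.Icc 1 K, (K.choose k : ℝ) / k ^ 2 :=
    calc ∫ ω, N ω ^ 2 ∂μ
        ≤ ∫ ω, ∑ k, T k ω ^ 2 ∂μ :=
          integral_mono_of_nonneg (ae_of_all _ fun ω => sq_nonneg _)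
            (integrable_finsetSum _ fun k _ => integrable_sq_of_exp_tail (hp k) (hmeas k) (hexp k))
            (ae_of_all _ fun ω => by simpa only [hN ω] using sq_ciSup_le_sum_sq fun k => T k ω)
      _ = ∑ k, 2 * (p k)⁻¹ ^ 2 := by
          rw [integral_finsetSum _ fun k _ =>
            integrable_sq_of_exp_tail (hp k) (hmeas k) (hexp k)]
          exact Finset.sum_congr rfl fun k _ => integral_sq_of_exp_tail (hp k) (hmeas k) (hexp k)
      _ ≤ ∑ _k : Fin K, 2 * pmin⁻¹ ^ 2 := by
          refine Finset.sum_le_sum fun k _ => ?_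
          gcongr 2 * ?_ ^ 2
          · exact (inv_pos.2 (hp k)).le
          · exact hpmin ▸ inv_le_inv_ciInf hp k
      _ = 2 * pmin⁻¹ ^ 2 * K := by simp [mul_comm]
      _ ≤ _ := by gcongr; exact natCast_le_sum_choose_div_sq K
  exact ⟨h_second_moment,
    (variance_le_expectation_sq hN_meas.aestronglyMeasurable).trans h_second_moment⟩

/-- Coupon collector second-moment bound: `E[N²] ≤ 2 p_min⁻² Σ_{k=1}^K C(K,k)/k²`, and
consequently `Var(N)` satisfies the same bound. -/
theorem coupon_collector_second_moment_bound {Ω : Type*} [MeasurableSpace Ω]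
    (μ : Measure Ω) [IsProbabilityMeasure μ]
    (K : ℕ) (hK : 0 < K) (p : Fin K → ℝ) (hp : ∀ k, 0 < p k)
    (T : Fin K → Ω → ℝ) (hmeas : ∀ k, Measurable (T k))
    (hindep : iIndepFun T μ)
    (hexp : ∀ k (t : ℝ), 0 ≤ t →
      μ {ω | t < T k ω} = ENNReal.ofReal (Real.exp (-(p k) * t)))
    (N : Ω → ℝ) (hN : ∀ ω, N ω = ⨆ k, T k ω)
    (pmin : ℝ) (hpmin : pmin = ⨅ k, p k) :
    (∫ ω, (N ω) ^ 2 ∂μ ≤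
      2 * pmin⁻¹ ^ 2 * ∑ k ∈ Finset.Icc 1 K, (K.choose k : ℝ) / k ^ 2) ∧
    (variance N μ ≤
      2 * pmin⁻¹ ^ 2 * ∑ k ∈ Finset.Icc 1 K, (K.choose k : ℝ) / k ^ 2) :=
  coupon_collector_second_moment_bound_general μ K p hp T hmeas hexp N hN pmin hpmin
end
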